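/- arXiv:1009.1723 — 6 statements merged into one kernel-verified Lean document; each statement's English description precedes it below -/
import Mathlib

section
/- Let r > 0, let γ₀ ∈ ℍ, and let ṽ₀ ∈ ℝ³ be nonzero with ⟨ṽ₀, γ₀⟩ₘ = 0. Set λ := √⟨ṽ₀,ṽ₀⟩ₘ (which is a positive real number since ṽ₀ is spacelike), v₀ := λ⁻¹ ṽ₀, v₁ := −r γ₀ + √(1+r²) (v₀ ×ₘ γ₀), and w := v₀ ×ₘ v₁. Then {v₀,v₁,w} is a positive oriented orthonormal system, w ∈ ℍ, and the curve α(t) = √(1+r²) w + r cos(λt/r) v₁ + r sin(λt/r) v₀ satisfies α(0) = γ₀ and α̇(0) = ṽ₀. -/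
noncomputable section

open Real

/-- The Minkowski inner product on ℝ³. -/
def mink (v w : Fin 3 → ℝ) : ℝ := v 0 * w 0 + v 1 * w 1 - v 2 * w 2

/-- The twisted cross product on ℝ³. -/
def mcross (v w : Fin 3 → ℝ) : Fin 3 → ℝ :=
  ![v 2 * w 1 - v 1 * w 2, v 0 * w 2 - v 2 * w 0, v 0 * w 1 - v 1 * w 0]

/-- A positive oriented orthonormal system with respect to the Minkowski metric. -/
def posOrth (v₀ v₁ w : Fin 3 → ℝ) : Prop :=
  mink v₀ v₁ = 0 ∧ mink v₀ w = 0 ∧ mink v₁ w = 0 ∧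
  mink v₀ v₀ = 1 ∧ mink v₁ v₁ = 1 ∧ mink w w = -1 ∧
  mcross v₀ v₁ = w

/-- Membership in the hyperbolic plane ℍ ⊂ ℝ³. -/
def inH (x : Fin 3 → ℝ) : Prop := x 2 ^ 2 - x 0 ^ 2 - x 1 ^ 2 = 1 ∧ 0 < x 2

/-!
The frame is obtained by Minkowski-orthonormalising: the tangent vector `ṽ₀` is spacelike by
the reverse Cauchy–Schwarz inequality, so `v₀` is a unit vector orthogonal to `γ₀`, and
`u := v₀ ×ₘ γ₀` completes `(v₀, γ₀)` to an orthonormal frame. In the plane `v₀^⊥` the map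
`v₀ ×ₘ ·` acts as a Lorentz rotation exchanging `γ₀` and `u`, so `w = √(1+r²) γ₀ - r u` is a
hyperbolic rotation of `γ₀`, hence again on the upper sheet ℍ. Evaluating the circle and its
velocity at `t = 0` then only uses `√(1+r²)² - r² = 1`.
-/

section Minkowski

variable {x u v w : Fin 3 → ℝ}

theorem mink_comm (v w : Fin 3 → ℝ) : mink v w = mink w v := by
  unfold mink; ring

@[simp]
theorem mink_add_left (x y z : Fin 3 → ℝ) : mink (x + y) z = mink x z + mink y z := by
  simp only [mink, Pi.add_apply]; ring

@[simp]
theorem mink_add_right (x y z : Fin 3 → ℝ) : mink z (x + y) = mink z x + mink z y := by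
  simp only [mink, Pi.add_apply]; ring

@[simp]
theorem mink_smul_left (a : ℝ) (x y : Fin 3 → ℝ) : mink (a • x) y = a * mink x y := by
  simp only [mink, Pi.smul_apply, smul_eq_mul]; ring

@[simp]
theorem mink_smul_right (a : ℝ) (x y : Fin 3 → ℝ) : mink x (a • y) = a * mink x y := by
  simp only [mink, Pi.smul_apply, smul_eq_mul]; ring

theorem mink_mcross_left (v w : Fin 3 → ℝ) : mink v (mcross v w) = 0 := by
  simp [mink, mcross]; ring

theorem mink_mcross_right (v w : Fin 3 → ℝ) : mink w (mcross v w) = 0 := by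
  simp [mink, mcross]; ring

theorem mink_mcross_self (v w : Fin 3 → ℝ) :
    mink (mcross v w) (mcross v w) = mink v w ^ 2 - mink v v * mink w w := by
  simp [mink, mcross]; ring

theorem mcross_mcross (v w : Fin 3 → ℝ) :
    mcross v (mcross v w) = mink v v • w - mink v w • v := by
  funext i; fin_cases i <;> simp [mink, mcross] <;> ring

theorem mcross_add_smul_right (a b : ℝ) (v x y : Fin 3 → ℝ) :
    mcross v (a • x + b • y) = a • mcross v x + b • mcross v y := by
  funext i; fin_cases i <;> simp [mcross] <;> ring

theorem posOrth_mcross (h₀ : mink v v = 1) (h₁ : mink w w = 1) (h : mink v w = 0) :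
    posOrth v w (mcross v w) := by
  refine ⟨h, mink_mcross_left v w, mink_mcross_right v w, h₀, h₁, ?_, rfl⟩
  rw [mink_mcross_self, h, h₀, h₁]
  ring

theorem mcross_smul_add_smul_mcross (hv : mink v v = 1) (hx : mink v x = 0) (a b : ℝ) :
    mcross v (a • x + b • mcross v x) = b • x + a • mcross v x := by
  rw [mcross_add_smul_right, mcross_mcross, hv, hx, one_smul, zero_smul, sub_zero, add_comm]

theorem inH_iff : inH x ↔ mink x x = -1 ∧ 0 < x 2 := by
  unfold inH mink
  constructor <;> rintro ⟨h, hpos⟩ <;> exact ⟨by linear_combination -h, hpos⟩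

theorem sq_apply_two_le_of_mink_eq_zero (hx : inH x) (hu : mink u x = 0) :
    u 2 ^ 2 ≤ mink u u * (x 2 ^ 2 - 1) := by
  obtain ⟨hx₁, hx₂⟩ := hx
  unfold mink at hu ⊢
  have hcs : (u 0 * x 0 + u 1 * x 1) ^ 2 ≤ (u 0 ^ 2 + u 1 ^ 2) * (x 2 ^ 2 - 1) := by
    nlinarith [sq_nonneg (u 0 * x 1 - u 1 * x 0)]
  rw [show u 0 * x 0 + u 1 * x 1 = u 2 * x 2 by linarith] at hcs
  nlinarith

theorem mink_self_pos_of_mink_eq_zero (hx : inH x) (hu : mink u x = 0) (hu₀ : u ≠ 0) :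
    0 < mink u u := by
  by_contra! hneg
  have hc : 1 ≤ x 2 ^ 2 := by linarith [hx.1, sq_nonneg (x 0), sq_nonneg (x 1)]
  have h₂ : u 2 = 0 := by
    nlinarith [sq_apply_two_le_of_mink_eq_zero hx hu, sq_nonneg (u 2)]
  have h₀ : u 0 = 0 := by
    unfold mink at hneg; nlinarith [sq_nonneg (u 0), sq_nonneg (u 1)]
  have h₁ : u 1 = 0 := by
    unfold mink at hneg; nlinarith [sq_nonneg (u 0), sq_nonneg (u 1)]
  exact hu₀ (funext fun i => by fin_cases i <;> assumption)

theorem inH_smul_add_smul (hx : inH x) (hu : mink u u = 1) (hux : mink u x = 0) {a b : ℝ}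
    (ha : 0 < a) (hab : a ^ 2 - b ^ 2 = 1) : inH (a • x + b • u) := by
  obtain ⟨hxx, hx₂⟩ := inH_iff.1 hx
  have hu₂ := sq_apply_two_le_of_mink_eq_zero hx hux
  rw [hu, one_mul] at hu₂
  have hlt : (b * u 2) ^ 2 < (a * x 2) ^ 2 := by nlinarith [sq_nonneg b]
  have habs := abs_lt_of_sq_lt_sq hlt (by positivity)
  refine inH_iff.2 ⟨?_, ?_⟩
  · simp only [mink_add_left, mink_add_right, mink_smul_left, mink_smul_right, hxx, hu, hux,
      mink_comm x u]
    linear_combination -hab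
  · simp only [Pi.add_apply, Pi.smul_apply, smul_eq_mul]
    linarith [neg_abs_le (b * u 2)]

end Minkowski

theorem hasDerivAt_circle {E : Type*} [NormedAddCommGroup E] [NormedSpace ℝ E]
    (c a b : E) {r : ℝ} (hr : r ≠ 0) (lam t : ℝ) :
    HasDerivAt (fun t => c + (r * cos (lam * t / r)) • a + (r * sin (lam * t / r)) • b)
      ((-(lam * sin (lam * t / r))) • a + (lam * cos (lam * t / r)) • b) t := by
  have hθ : HasDerivAt (fun t => lam * t / r) (lam / r) t := by
    simpa using ((hasDerivAt_id t).const_mul lam).div_const r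
  have hcos := (hθ.cos.const_mul r).smul_const a
  have hsin := (hθ.sin.const_mul r).smul_const b
  convert ((hasDerivAt_const t c).add hcos).add hsin using 1
  · rfl
  · rw [zero_add]
    congr 2 <;> field_simp

/-- every initial condition (γ₀, ṽ₀) with ṽ₀ ≠ 0 tangent to ℍ at γ₀ is attained
by a circle solution: the constructed frame is a positive oriented orthonormal system,
its center w lies in ℍ, and the circle has the prescribed initial values. -/
theorem stmt_3 (r : ℝ) (hr : 0 < r) (γ₀ vt : Fin 3 → ℝ)
    (hγ : inH γ₀) (hvt : vt ≠ 0) (hperp : mink vt γ₀ = 0) :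
    let lam : ℝ := Real.sqrt (mink vt vt)
    let v₀ : Fin 3 → ℝ := lam⁻¹ • vt
    let v₁ : Fin 3 → ℝ := (-r) • γ₀ + Real.sqrt (1 + r ^ 2) • mcross v₀ γ₀
    let w : Fin 3 → ℝ := mcross v₀ v₁
    let α : ℝ → Fin 3 → ℝ := fun t =>
      Real.sqrt (1 + r ^ 2) • w + (r * Real.cos (lam * t / r)) • v₁ +
        (r * Real.sin (lam * t / r)) • v₀
    0 < lam ∧ posOrth v₀ v₁ w ∧ inH w ∧ α 0 = γ₀ ∧ deriv α 0 = vt := by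
  intro lam v₀ v₁ w α
  set s := √(1 + r ^ 2)
  have hs : s ^ 2 - r ^ 2 = 1 := by rw [sq_sqrt (by positivity)]; ring
  have hγγ : mink γ₀ γ₀ = -1 := (inH_iff.1 hγ).1
  have hvtvt := mink_self_pos_of_mink_eq_zero hγ hperp hvt
  have hlam : 0 < lam := sqrt_pos.2 hvtvt
  have hv₀ : mink v₀ v₀ = 1 := by
    simp only [v₀, mink_smul_left, mink_smul_right, lam]
    field_simp
    rw [sq_sqrt hvtvt.le]
  have hv₀γ : mink v₀ γ₀ = 0 := by simp only [v₀, mink_smul_left, hperp, mul_zero]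
  set u := mcross v₀ γ₀
  have hu : mink u u = 1 := by rw [mink_mcross_self, hv₀γ, hv₀, hγγ]; ring
  have huγ : mink u γ₀ = 0 := by rw [mink_comm]; exact mink_mcross_right v₀ γ₀
  have hv₀u : mink v₀ u = 0 := mink_mcross_left v₀ γ₀
  have hv₁_def : v₁ = (-r) • γ₀ + s • u := rfl
  have hv₁ : mink v₁ v₁ = 1 := by
    simp only [hv₁_def, mink_add_left, mink_add_right, mink_smul_left, mink_smul_right, hγγ, hu,
      huγ, mink_comm γ₀ u]
    linear_combination hs
  have hv₀v₁ : mink v₀ v₁ = 0 := by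
    simp only [hv₁_def, mink_add_right, mink_smul_right, hv₀γ, hv₀u, mul_zero, add_zero]
  have hw : w = s • γ₀ + (-r) • u := mcross_smul_add_smul_mcross hv₀ hv₀γ (-r) s
  have hα : HasDerivAt α vt 0 := by
    refine (hasDerivAt_circle (s • w) v₁ v₀ hr.ne' lam 0).congr_deriv ?_
    simp [v₀, hlam.ne']
  refine ⟨hlam, posOrth_mcross hv₀ hv₁ hv₀v₁,
    hw ▸ inH_smul_add_smul hγ hu huγ (sqrt_pos.2 (by positivity)) (by rwa [neg_sq]), ?_, hα.deriv⟩
  simp only [α, hw, hv₁_def, mul_zero, zero_div, cos_zero, sin_zero, mul_one, zero_smul, add_zero]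
  linear_combination (norm := module) hs • γ₀
end
end

section
/- Let r > 0 and let {v₀,v₁,w} be a positive oriented orthonormal system with w³ > 0. Define F : {x ∈ ℝ² : |x| ≤ 1} → ℝ³ by F(x₁,x₂) = √(1 + r²(x₁²+x₂²)) w + r x₁ v₁ + r x₂ v₀. Then F maps into ℍ, F is a smooth immersion (its differential is injective at every point of the closed disk), and F(cos(2πt), sin(2πt)) = α(t) for all t, where α(t) = √(1+r²) w + r cos(2πt) v₁ + r sin(2πt) v₀. -/
noncomputable section

open Real

lemma pos_aux (a b c d e f s : ℝ) (hc : c^2 = 1 + a^2 + b^2) (hf2 : f^2 = 1 + d^2 + e^2)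
    (hf : 0 < f) (hs : 0 < s) (hm : a*d + b*e - c*f = -s) : 0 < c := by
  by_contra hcn
  push_neg at hcn
  nlinarith [sq_nonneg (a*e - b*d), mul_nonneg (neg_nonneg.mpr hcn) hf.le, mul_pos hs hs,
    sq_nonneg (a*d+b*e)]

/-- the map F(x₁,x₂) = √(1+r²(x₁²+x₂²))w + rx₁v₁ + rx₂v₀ maps the closed unit
disk into ℍ, is a smooth immersion there, and restricts to α on the boundary circle. -/
theorem stmt_5 (r : ℝ) (hr : 0 < r) (v₀ v₁ w : Fin 3 → ℝ)
    (hsys : posOrth v₀ v₁ w) (hw : 0 < w 2) :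
    let F : ℝ × ℝ → Fin 3 → ℝ := fun x =>
      Real.sqrt (1 + r ^ 2 * (x.1 ^ 2 + x.2 ^ 2)) • w + (r * x.1) • v₁ + (r * x.2) • v₀
    let α : ℝ → Fin 3 → ℝ := fun t =>
      Real.sqrt (1 + r ^ 2) • w + (r * Real.cos (2 * Real.pi * t)) • v₁ +
        (r * Real.sin (2 * Real.pi * t)) • v₀
    (∀ x : ℝ × ℝ, x.1 ^ 2 + x.2 ^ 2 ≤ 1 → inH (F x)) ∧
    ContDiff ℝ (⊤ : ℕ∞) F ∧
    (∀ x : ℝ × ℝ, x.1 ^ 2 + x.2 ^ 2 ≤ 1 → Function.Injective (fderiv ℝ F x)) ∧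
    (∀ t : ℝ, F (Real.cos (2 * Real.pi * t), Real.sin (2 * Real.pi * t)) = α t) := by
  obtain ⟨h01, h0w, h1w, h00, h11, hww, -⟩ := hsys
  simp only [mink] at h01 h0w h1w h00 h11 hww
  intro F α
  set s : ℝ × ℝ → ℝ := fun x => Real.sqrt (1 + r ^ 2 * (x.1 ^ 2 + x.2 ^ 2)) with hs_def
  have ht : ∀ x : ℝ × ℝ, 0 < 1 + r ^ 2 * (x.1 ^ 2 + x.2 ^ 2) := by intro x; positivity
  have hs2 : ∀ x, s x ^ 2 = 1 + r ^ 2 * (x.1 ^ 2 + x.2 ^ 2) := fun x => Real.sq_sqrt (ht x).le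
  have hspos : ∀ x, 0 < s x := fun x => Real.sqrt_pos.mpr (ht x)
  have hFc : ∀ (x : ℝ × ℝ) (i : Fin 3),
      F x i = s x * w i + (r * x.1) * v₁ i + (r * x.2) * v₀ i := by
    intro x i
    simp [F, s, mul_comm]
  -- smoothness
  have hu : ContDiff ℝ (⊤ : ℕ∞) (fun x : ℝ × ℝ => 1 + r ^ 2 * (x.1 ^ 2 + x.2 ^ 2)) :=
    contDiff_const.add (contDiff_const.mul ((contDiff_fst.pow 2).add (contDiff_snd.pow 2)))
  have hscd : ContDiff ℝ (⊤ : ℕ∞) s := hu.sqrt fun x => (ht x).ne'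
  have hcd : ContDiff ℝ (⊤ : ℕ∞) F := by
    exact ((hscd.smul contDiff_const).add
      ((contDiff_const.mul contDiff_fst).smul contDiff_const)).add
      ((contDiff_const.mul contDiff_snd).smul contDiff_const)
  -- quadratic form
  have e1 : ∀ x : ℝ × ℝ, F x 2 ^ 2 - F x 0 ^ 2 - F x 1 ^ 2 = 1 := by
    intro x
    simp only [hFc]
    linear_combination (-(s x ^ 2)) * hww - (r * x.1) ^ 2 * h11 - (r * x.2) ^ 2 * h00 -
      (2 * s x * (r * x.1)) * h1w - (2 * s x * (r * x.2)) * h0w -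
      (2 * (r * x.1) * (r * x.2)) * h01 + hs2 x
  have e2 : ∀ x : ℝ × ℝ, F x 0 * w 0 + F x 1 * w 1 - F x 2 * w 2 = -(s x) := by
    intro x
    simp only [hFc]
    linear_combination s x * hww + (r * x.1) * h1w + (r * x.2) * h0w
  have hpos : ∀ x : ℝ × ℝ, 0 < F x 2 := by
    intro x
    exact pos_aux (F x 0) (F x 1) (F x 2) (w 0) (w 1) (w 2) (s x)
      (by linarith [e1 x]) (by linarith [hww]) hw (hspos x) (e2 x)
  refine ⟨fun x _ => ⟨e1 x, hpos x⟩, hcd, ?_, ?_⟩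
  · -- immersion
    intro x _
    have hdF : DifferentiableAt ℝ F x := (hcd.differentiable (by simp)) x
    set D := fderiv ℝ F x with hD
    have key : ∀ v : Fin 3 → ℝ,
        (∀ y : ℝ × ℝ, v 0 * F y 0 + v 1 * F y 1 - v 2 * F y 2 = r * y.1) →
        ∀ u : ℝ × ℝ, v 0 * D u 0 + v 1 * D u 1 - v 2 * D u 2 = r * u.1 := by
      intro v hv u
      let m : (Fin 3 → ℝ) →L[ℝ] ℝ :=
        v 0 • ContinuousLinearMap.proj 0 + v 1 • ContinuousLinearMap.proj 1
          - v 2 • ContinuousLinearMap.proj 2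
      have hm : ∀ z : Fin 3 → ℝ, m z = v 0 * z 0 + v 1 * z 1 - v 2 * z 2 := by
        intro z; simp [m]
      have h1 : HasFDerivAt (fun y => m (F y)) (m.comp D) x :=
        (m.hasFDerivAt).comp x hdF.hasFDerivAt
      have h2 : (fun y => m (F y)) = fun y : ℝ × ℝ => r * y.1 := by
        funext y; rw [hm]; exact hv y
      rw [h2] at h1
      have h3 : HasFDerivAt (fun y : ℝ × ℝ => r * y.1)
          (r • ContinuousLinearMap.fst ℝ ℝ ℝ) x := by
        simpa using (hasFDerivAt_fst (𝕜 := ℝ) (p := x)).const_mul r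
      have h4 : m.comp D = r • ContinuousLinearMap.fst ℝ ℝ ℝ := h1.unique h3
      have h5 : (m.comp D) u = (r • ContinuousLinearMap.fst ℝ ℝ ℝ) u := by rw [h4]
      rw [← hm (D u)]
      simpa using h5
    have k1 := key v₁ (fun y => by
      simp only [hFc]
      linear_combination s y * h1w + (r * y.1) * h11 + (r * y.2) * h01)
    -- for v₀ we get r * y.2; adapt: swap coordinates via the snd version
    have key2 : ∀ u : ℝ × ℝ, v₀ 0 * D u 0 + v₀ 1 * D u 1 - v₀ 2 * D u 2 = r * u.2 := by
      intro u
      let m : (Fin 3 → ℝ) →L[ℝ] ℝ :=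
        v₀ 0 • ContinuousLinearMap.proj 0 + v₀ 1 • ContinuousLinearMap.proj 1
          - v₀ 2 • ContinuousLinearMap.proj 2
      have hm : ∀ z : Fin 3 → ℝ, m z = v₀ 0 * z 0 + v₀ 1 * z 1 - v₀ 2 * z 2 := by
        intro z; simp [m]
      have h1 : HasFDerivAt (fun y => m (F y)) (m.comp D) x :=
        (m.hasFDerivAt).comp x hdF.hasFDerivAt
      have h2 : (fun y => m (F y)) = fun y : ℝ × ℝ => r * y.2 := by
        funext y; rw [hm]
        simp only [hFc]
        linear_combination s y * h0w + (r * y.1) * h01 + (r * y.2) * h00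
      rw [h2] at h1
      have h3 : HasFDerivAt (fun y : ℝ × ℝ => r * y.2)
          (r • ContinuousLinearMap.snd ℝ ℝ ℝ) x := by
        simpa using (hasFDerivAt_snd (𝕜 := ℝ) (p := x)).const_mul r
      have h4 : m.comp D = r • ContinuousLinearMap.snd ℝ ℝ ℝ := h1.unique h3
      have h5 : (m.comp D) u = (r • ContinuousLinearMap.snd ℝ ℝ ℝ) u := by rw [h4]
      rw [← hm (D u)]
      simpa using h5
    intro u u' huu
    have c1 : r * u.1 = r * u'.1 := by
      rw [← k1 u, ← k1 u', huu]
    have c2 : r * u.2 = r * u'.2 := by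
      rw [← key2 u, ← key2 u', huu]
    have : u.1 = u'.1 := by
      field_simp at c1; exact c1
    have h2' : u.2 = u'.2 := by
      field_simp at c2; exact c2
    exact Prod.ext this h2'
  · -- boundary
    intro t
    show Real.sqrt (1 + r ^ 2 * ((Real.cos (2 * Real.pi * t)) ^ 2 +
        (Real.sin (2 * Real.pi * t)) ^ 2)) • w + _ + _ = _
    rw [Real.cos_sq_add_sin_sq, mul_one]
end
end

section
/- Let r > 0, {v₀,v₁,w} a positive oriented orthonormal system, k₀ = √(1+r²)/r, and α(t) = √(1+r²) w + r cos(2πt) v₁ + r sin(2πt) v₀. Define the vector fields along α: W₀(t) = t α̇(t), W₁(t) = α̇(t), W₂(t) = √(1+r²) v₁ + r cos(2πt) w, and W₃(t) = √(1+r²) v₀ + r sin(2πt) w. Then each Wᵢ (i = 0,1,2,3) satisfies ⟨Wᵢ(t), α(t)⟩ₘ = 0 for all t and solves the linearized equation 0 = −D_t²W + ⟨α̇,α̇⟩ₘ W − ⟨W, α̇⟩ₘ α̇ + |α̇|ₘ⁻¹ ⟨D_tW, α̇⟩ₘ k₀ (α ×ₘ α̇) + |α̇|ₘ k₀ (α ×ₘ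 D_tW), where D_tV(t) = V̇(t) + ⟨V̇(t), α(t)⟩ₘ α(t) and |α̇|ₘ = √⟨α̇,α̇⟩ₘ. -/
noncomputable section

open Real

/-- The covariant derivative on ℍ of a tangent vector field `V` along a curve `γ` in ℍ:
`D_t V(t) = V̇(t) + ⟨V̇(t), γ(t)⟩ₘ γ(t)`. -/
def covDt (γ V : ℝ → Fin 3 → ℝ) : ℝ → Fin 3 → ℝ :=
  fun t => deriv V t + mink (deriv V t) (γ t) • γ t

/-- The linearization of the prescribed geodesic curvature operator along a curve α in ℍ:
`L W = −D_t²W + ⟨α̇,α̇⟩ₘ W − ⟨W,α̇⟩ₘ α̇ + |α̇|ₘ⁻¹ ⟨D_tW,α̇⟩ₘ k₀ (α ×ₘ α̇) + |α̇|ₘ k₀ (α ×ₘ D_tW)`. -/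
def linOp (k₀ : ℝ) (α W : ℝ → Fin 3 → ℝ) (t : ℝ) : Fin 3 → ℝ :=
  -(covDt α (covDt α W) t) + mink (deriv α t) (deriv α t) • W t
    - mink (W t) (deriv α t) • deriv α t
    + ((Real.sqrt (mink (deriv α t) (deriv α t)))⁻¹ * mink (covDt α W t) (deriv α t) * k₀) •
        mcross (α t) (deriv α t)
    + (Real.sqrt (mink (deriv α t) (deriv α t)) * k₀) • mcross (α t) (covDt α W t)

/-!
Each `Wᵢ` is the variation field of a family of solutions obtained from `α` by a symmetry of
the problem: the reparametrisation `t ↦ λ t` (`W₀`), the rotation about `w`, i.e. a time shift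
(`W₁`), and the Lorentz boosts in the `(v₁, w)`- and `(v₀, w)`-planes (`W₂`, `W₃`).
We verify the equations directly. In coordinates with respect to the frame `(v₀, v₁, w)` the
Minkowski product and the twisted cross product take their standard form, and `D_t² W` is
expressed through the first two derivatives of `W`; each component of the linearised equation
then becomes a rational identity in `sin`, `cos` and `√(1 + r²)` that holds modulo
`sin² + cos² = 1` and `√(1 + r²)² = 1 + r²`.
-/

theorem HasDerivAt.mink {f g : ℝ → Fin 3 → ℝ} {f' g' : Fin 3 → ℝ} {t : ℝ}
    (hf : HasDerivAt f f' t) (hg : HasDerivAt g g' t) :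
    HasDerivAt (fun u => mink (f u) (g u)) (mink f' (g t) + mink (f t) g') t := by
  have hfi := hasDerivAt_pi.1 hf
  have hgi := hasDerivAt_pi.1 hg
  exact ((((hfi 0).mul (hgi 0)).add ((hfi 1).mul (hgi 1))).sub ((hfi 2).mul (hgi 2))).congr_deriv
    (by simp only [_root_.mink]; ring)

theorem covDt_eq_of_hasDerivAt {γ V V' : ℝ → Fin 3 → ℝ} (hV : ∀ t, HasDerivAt V (V' t) t) :
    covDt γ V = fun t => V' t + mink (V' t) (γ t) • γ t := by
  funext t
  rw [covDt, (hV t).deriv]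

theorem hasDerivAt_covDt {γ γ' V V' V'' : ℝ → Fin 3 → ℝ}
    (hγ : ∀ t, HasDerivAt γ (γ' t) t) (hV : ∀ t, HasDerivAt V (V' t) t)
    (hV' : ∀ t, HasDerivAt V' (V'' t) t) (t : ℝ) :
    HasDerivAt (covDt γ V) (V'' t +
      (mink (V'' t) (γ t) + mink (V' t) (γ' t)) • γ t + mink (V' t) (γ t) • γ' t) t := by
  rw [covDt_eq_of_hasDerivAt hV]
  exact ((hV' t).add (((hV' t).mink (hγ t)).smul (hγ t))).congr_deriv (by module)

def frame (v₀ v₁ w : Fin 3 → ℝ) (a b c : ℝ) : Fin 3 → ℝ := a • v₀ + b • v₁ + c • w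

section Frame

variable {v₀ v₁ w : Fin 3 → ℝ}

theorem mink_frame (h : posOrth v₀ v₁ w) (a b c a' b' c' : ℝ) :
    mink (frame v₀ v₁ w a b c) (frame v₀ v₁ w a' b' c') = a * a' + b * b' - c * c' := by
  obtain ⟨h01, h0w, h1w, h00, h11, hww, -⟩ := h
  simp only [mink, frame, Pi.add_apply, Pi.smul_apply, smul_eq_mul] at *
  linear_combination (a * a') * h00 + (b * b') * h11 + (c * c') * hww + (a * b' + b * a') * h01 +
    (a * c' + c * a') * h0w + (b * c' + c * b') * h1w

theorem mcross_frame (h : posOrth v₀ v₁ w) (a b c a' b' c' : ℝ) :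
    mcross (frame v₀ v₁ w a b c) (frame v₀ v₁ w a' b' c') =
      frame v₀ v₁ w (c * b' - b * c') (a * c' - c * a') (a * b' - b * a') := by
  obtain ⟨h01, -, -, h00, h11, -, hw⟩ := h
  subst hw
  simp only [mink] at h01 h00 h11
  funext i
  fin_cases i <;>
    simp only [mcross, frame, Pi.add_apply, Pi.smul_apply, smul_eq_mul, Fin.isValue,
      Matrix.cons_val_zero, Matrix.cons_val_one, Matrix.cons_val_two, Matrix.head_cons,
      Matrix.tail_cons, Fin.zero_eta, Fin.mk_one, Fin.reduceFinMk]
  · linear_combination (a * c' - c * a') * (v₁ 0 * h00 - v₀ 0 * h01) +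
      (b * c' - c * b') * (v₁ 0 * h01 - v₀ 0 * h11)
  · linear_combination (a * c' - c * a') * (v₁ 1 * h00 - v₀ 1 * h01) +
      (b * c' - c * b') * (v₁ 1 * h01 - v₀ 1 * h11)
  · linear_combination (a * c' - c * a') * (v₁ 2 * h00 - v₀ 2 * h01) +
      (b * c' - c * b') * (v₁ 2 * h01 - v₀ 2 * h11)

theorem frame_add (a b c a' b' c' : ℝ) :
    frame v₀ v₁ w a b c + frame v₀ v₁ w a' b' c' = frame v₀ v₁ w (a + a') (b + b') (c + c') := by
  simp only [frame]; module

theorem frame_sub (a b c a' b' c' : ℝ) :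
    frame v₀ v₁ w a b c - frame v₀ v₁ w a' b' c' = frame v₀ v₁ w (a - a') (b - b') (c - c') := by
  simp only [frame]; module

theorem neg_frame (a b c : ℝ) : -frame v₀ v₁ w a b c = frame v₀ v₁ w (-a) (-b) (-c) := by
  simp only [frame]; module

theorem smul_frame (m a b c : ℝ) :
    m • frame v₀ v₁ w a b c = frame v₀ v₁ w (m * a) (m * b) (m * c) := by
  simp only [frame]; module

theorem frame_eq_zero {a b c : ℝ} (ha : a = 0) (hb : b = 0) (hc : c = 0) :
    frame v₀ v₁ w a b c = 0 := by
  simp only [frame, ha, hb, hc, zero_smul, add_zero]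

theorem HasDerivAt.frame {a b c : ℝ → ℝ} {a' b' c' t : ℝ} (ha : HasDerivAt a a' t)
    (hb : HasDerivAt b b' t) (hc : HasDerivAt c c' t) :
    HasDerivAt (fun u => frame v₀ v₁ w (a u) (b u) (c u)) (frame v₀ v₁ w a' b' c') t :=
  ((ha.smul_const v₀).add (hb.smul_const v₁)).add (hc.smul_const w)

end Frame

theorem hasDerivAt_mul_sin (c θ t : ℝ) :
    HasDerivAt (fun u => c * sin (θ * u)) (θ * c * cos (θ * t)) t :=
  ((((hasDerivAt_id' t).const_mul θ).sin).const_mul c).congr_deriv (by ring)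

theorem hasDerivAt_mul_cos (c θ t : ℝ) :
    HasDerivAt (fun u => c * cos (θ * u)) (-(θ * c) * sin (θ * t)) t :=
  ((((hasDerivAt_id' t).const_mul θ).cos).const_mul c).congr_deriv (by ring)

section HypCircle

variable {v₀ v₁ w : Fin 3 → ℝ} {r θ : ℝ}

def hypCircle (v₀ v₁ w : Fin 3 → ℝ) (r θ t : ℝ) : Fin 3 → ℝ :=
  frame v₀ v₁ w (r * sin (θ * t)) (r * cos (θ * t)) √(1 + r ^ 2)

theorem hasDerivAt_hypCircle (t : ℝ) : HasDerivAt (hypCircle v₀ v₁ w r θ)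
    (frame v₀ v₁ w (θ * r * cos (θ * t)) (-(θ * r) * sin (θ * t)) 0) t :=
  (hasDerivAt_mul_sin r θ t).frame (hasDerivAt_mul_cos r θ t) (hasDerivAt_const t _)

theorem deriv_hypCircle : deriv (hypCircle v₀ v₁ w r θ) =
    fun t => frame v₀ v₁ w (θ * r * cos (θ * t)) (-(θ * r) * sin (θ * t)) 0 :=
  funext fun t => hasDerivAt_hypCircle t |>.deriv

theorem hasDerivAt_deriv_hypCircle (t : ℝ) :
    HasDerivAt (fun u => frame v₀ v₁ w (θ * r * cos (θ * u)) (-(θ * r) * sin (θ * u)) 0)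
      (frame v₀ v₁ w (-(θ ^ 2 * r) * sin (θ * t)) (-(θ ^ 2 * r) * cos (θ * t)) 0) t :=
  ((hasDerivAt_mul_cos (θ * r) θ t).frame (hasDerivAt_mul_sin (-(θ * r)) θ t)
    (hasDerivAt_const t 0)).congr_deriv (by congr 1 <;> ring)

theorem hasDerivAt_deriv_deriv_hypCircle (t : ℝ) :
    HasDerivAt (fun u => frame v₀ v₁ w (-(θ ^ 2 * r) * sin (θ * u)) (-(θ ^ 2 * r) * cos (θ * u)) 0)
      (frame v₀ v₁ w (-(θ ^ 3 * r) * cos (θ * t)) (θ ^ 3 * r * sin (θ * t)) 0) t :=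
  ((hasDerivAt_mul_sin (-(θ ^ 2 * r)) θ t).frame (hasDerivAt_mul_cos (-(θ ^ 2 * r)) θ t)
    (hasDerivAt_const t 0)).congr_deriv (by congr 1 <;> ring)

variable (hsys : posOrth v₀ v₁ w)
include hsys

theorem sqrt_mink_deriv_hypCircle (hr : 0 ≤ r) (hθ : 0 ≤ θ) (t : ℝ) :
    √(mink (deriv (hypCircle v₀ v₁ w r θ) t) (deriv (hypCircle v₀ v₁ w r θ) t)) = θ * r := by
  have hspeed : (θ * r * cos (θ * t)) * (θ * r * cos (θ * t)) +
      (-(θ * r) * sin (θ * t)) * (-(θ * r) * sin (θ * t)) - 0 * 0 = (θ * r) ^ 2 := by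
    linear_combination (θ * r) ^ 2 * sin_sq_add_cos_sq (θ * t)
  rw [deriv_hypCircle, mink_frame hsys, hspeed, sqrt_sq (mul_nonneg hθ hr)]

theorem mink_hypCircle_fields (t : ℝ) :
    mink (t • deriv (hypCircle v₀ v₁ w r θ) t) (hypCircle v₀ v₁ w r θ t) = 0 ∧
      mink (deriv (hypCircle v₀ v₁ w r θ) t) (hypCircle v₀ v₁ w r θ t) = 0 ∧
      mink (√(1 + r ^ 2) • v₁ + (r * cos (θ * t)) • w) (hypCircle v₀ v₁ w r θ t) = 0 ∧
      mink (√(1 + r ^ 2) • v₀ + (r * sin (θ * t)) • w) (hypCircle v₀ v₁ w r θ t) = 0 := by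
  have h₂ : √(1 + r ^ 2) • v₁ + (r * cos (θ * t)) • w =
      frame v₀ v₁ w 0 √(1 + r ^ 2) (r * cos (θ * t)) := by
    simp only [frame, zero_smul, zero_add]
  have h₃ : √(1 + r ^ 2) • v₀ + (r * sin (θ * t)) • w =
      frame v₀ v₁ w √(1 + r ^ 2) 0 (r * sin (θ * t)) := by
    simp only [frame, zero_smul, add_zero]
  simp only [h₂, h₃, deriv_hypCircle, hypCircle, smul_frame, mink_frame hsys]
  refine ⟨?_, ?_, ?_, ?_⟩ <;> ring

theorem linOp_hypCircle_boost₁ (hr : 0 < r) (hθ : 0 < θ) (t : ℝ) :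
    linOp (√(1 + r ^ 2) / r) (hypCircle v₀ v₁ w r θ)
      (fun t => √(1 + r ^ 2) • v₁ + (r * cos (θ * t)) • w) t = 0 := by
  have hframe : (fun t => √(1 + r ^ 2) • v₁ + (r * cos (θ * t)) • w) =
      fun t => frame v₀ v₁ w 0 √(1 + r ^ 2) (r * cos (θ * t)) := by
    funext t; simp only [frame, zero_smul, zero_add]
  have hW := fun t => (hasDerivAt_const t (0 : ℝ)).frame (hasDerivAt_const t √(1 + r ^ 2))
    (hasDerivAt_mul_cos r θ t) (v₀ := v₀) (v₁ := v₁) (w := w)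
  have hW' := fun t => (hasDerivAt_const t (0 : ℝ)).frame (hasDerivAt_const t (0 : ℝ))
    (hasDerivAt_mul_sin (-(θ * r)) θ t) (v₀ := v₀) (v₁ := v₁) (w := w)
  rw [hframe, linOp, sqrt_mink_deriv_hypCircle hsys hr.le hθ.le,
    covDt_eq_of_hasDerivAt (hasDerivAt_covDt hasDerivAt_hypCircle hW hW'),
    covDt_eq_of_hasDerivAt hW, deriv_hypCircle]
  simp only [hypCircle, mink_frame hsys, mcross_frame hsys, frame_add, frame_sub, neg_frame,
    smul_frame]
  have := sq_sqrt (show 0 ≤ 1 + r ^ 2 by positivity)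
  refine frame_eq_zero ?_ ?_ ?_ <;> grind [sin_sq_add_cos_sq]

theorem linOp_hypCircle_boost₀ (hr : 0 < r) (hθ : 0 < θ) (t : ℝ) :
    linOp (√(1 + r ^ 2) / r) (hypCircle v₀ v₁ w r θ)
      (fun t => √(1 + r ^ 2) • v₀ + (r * sin (θ * t)) • w) t = 0 := by
  have hframe : (fun t => √(1 + r ^ 2) • v₀ + (r * sin (θ * t)) • w) =
      fun t => frame v₀ v₁ w √(1 + r ^ 2) 0 (r * sin (θ * t)) := by
    funext t; simp only [frame, zero_smul, add_zero]
  have hW := fun t => (hasDerivAt_const t √(1 + r ^ 2)).frame (hasDerivAt_const t (0 : ℝ))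
    (hasDerivAt_mul_sin r θ t) (v₀ := v₀) (v₁ := v₁) (w := w)
  have hW' := fun t => (hasDerivAt_const t (0 : ℝ)).frame (hasDerivAt_const t (0 : ℝ))
    (hasDerivAt_mul_cos (θ * r) θ t) (v₀ := v₀) (v₁ := v₁) (w := w)
  rw [hframe, linOp, sqrt_mink_deriv_hypCircle hsys hr.le hθ.le,
    covDt_eq_of_hasDerivAt (hasDerivAt_covDt hasDerivAt_hypCircle hW hW'),
    covDt_eq_of_hasDerivAt hW, deriv_hypCircle]
  simp only [hypCircle, mink_frame hsys, mcross_frame hsys, frame_add, frame_sub, neg_frame,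
    smul_frame]
  have := sq_sqrt (show 0 ≤ 1 + r ^ 2 by positivity)
  refine frame_eq_zero ?_ ?_ ?_ <;> grind [sin_sq_add_cos_sq]

theorem linOp_hypCircle_deriv (hr : 0 < r) (hθ : 0 < θ) (t : ℝ) :
    linOp (√(1 + r ^ 2) / r) (hypCircle v₀ v₁ w r θ)
      (fun t => deriv (hypCircle v₀ v₁ w r θ) t) t = 0 := by
  rw [linOp, sqrt_mink_deriv_hypCircle hsys hr.le hθ.le, deriv_hypCircle,
    covDt_eq_of_hasDerivAt (hasDerivAt_covDt hasDerivAt_hypCircle hasDerivAt_deriv_hypCircle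
      hasDerivAt_deriv_deriv_hypCircle),
    covDt_eq_of_hasDerivAt hasDerivAt_deriv_hypCircle]
  simp only [hypCircle, mink_frame hsys, mcross_frame hsys, frame_add, frame_sub, neg_frame,
    smul_frame]
  have := sq_sqrt (show 0 ≤ 1 + r ^ 2 by positivity)
  refine frame_eq_zero ?_ ?_ ?_ <;> grind [sin_sq_add_cos_sq]

theorem linOp_hypCircle_smul_deriv (hr : 0 < r) (hθ : 0 < θ) (t : ℝ) :
    linOp (√(1 + r ^ 2) / r) (hypCircle v₀ v₁ w r θ)
      (fun t => t • deriv (hypCircle v₀ v₁ w r θ) t) t = 0 := by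
  have hα' (t : ℝ) := hasDerivAt_deriv_hypCircle (v₀ := v₀) (v₁ := v₁) (w := w) (r := r) (θ := θ) t
  have hα'' (t : ℝ) :=
    hasDerivAt_deriv_deriv_hypCircle (v₀ := v₀) (v₁ := v₁) (w := w) (r := r) (θ := θ) t
  have hW := fun t => (hasDerivAt_id' t).fun_smul (hα' t)
  have hW' := fun t => ((hasDerivAt_id' t).fun_smul (hα'' t)).add ((hα' t).const_smul (1 : ℝ))
  rw [linOp, sqrt_mink_deriv_hypCircle hsys hr.le hθ.le, deriv_hypCircle,
    covDt_eq_of_hasDerivAt (hasDerivAt_covDt hasDerivAt_hypCircle hW hW'),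
    covDt_eq_of_hasDerivAt hW]
  simp only [hypCircle, mink_frame hsys, mcross_frame hsys, frame_add, frame_sub, neg_frame,
    smul_frame]
  have := sq_sqrt (show 0 ≤ 1 + r ^ 2 by positivity)
  refine frame_eq_zero ?_ ?_ ?_ <;> grind [sin_sq_add_cos_sq]

end HypCircle

/-- the vector fields W₀, W₁, W₂, W₃ are tangent to ℍ along α and solve
the linearized prescribed geodesic curvature equation. -/
theorem stmt_8 (r : ℝ) (hr : 0 < r) (v₀ v₁ w : Fin 3 → ℝ) (hsys : posOrth v₀ v₁ w) :
    let k₀ : ℝ := Real.sqrt (1 + r ^ 2) / r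
    let α : ℝ → Fin 3 → ℝ := fun t =>
      Real.sqrt (1 + r ^ 2) • w + (r * Real.cos (2 * Real.pi * t)) • v₁ +
        (r * Real.sin (2 * Real.pi * t)) • v₀
    let W₀ : ℝ → Fin 3 → ℝ := fun t => t • deriv α t
    let W₁ : ℝ → Fin 3 → ℝ := fun t => deriv α t
    let W₂ : ℝ → Fin 3 → ℝ := fun t =>
      Real.sqrt (1 + r ^ 2) • v₁ + (r * Real.cos (2 * Real.pi * t)) • w
    let W₃ : ℝ → Fin 3 → ℝ := fun t =>
      Real.sqrt (1 + r ^ 2) • v₀ + (r * Real.sin (2 * Real.pi * t)) • w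
    (∀ t : ℝ, mink (W₀ t) (α t) = 0 ∧ mink (W₁ t) (α t) = 0 ∧
      mink (W₂ t) (α t) = 0 ∧ mink (W₃ t) (α t) = 0) ∧
    (∀ t : ℝ, linOp k₀ α W₀ t = 0 ∧ linOp k₀ α W₁ t = 0 ∧
      linOp k₀ α W₂ t = 0 ∧ linOp k₀ α W₃ t = 0) := by
  intro k₀ α W₀ W₁ W₂ W₃
  have hα : α = hypCircle v₀ v₁ w r (2 * π) := by
    funext t
    simp only [α, hypCircle, frame]
    abel
  simp only [k₀, W₀, W₁, W₂, W₃, hα]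
  exact ⟨mink_hypCircle_fields hsys, fun t =>
    ⟨linOp_hypCircle_smul_deriv hsys hr two_pi_pos t, linOp_hypCircle_deriv hsys hr two_pi_pos t,
      linOp_hypCircle_boost₁ hsys hr two_pi_pos t, linOp_hypCircle_boost₀ hsys hr two_pi_pos t⟩⟩
end
end

section
/- Let 0 < r ≤ 1, and let ν₁, ν₂ : ℝ → ℝ be C¹, 1-periodic functions such that ν₂ satisfies ∫₀¹ ν₂(t) dt = 0, ∫₀¹ ν₂(t) cos(2πt) dt = 0, and ∫₀¹ ν₂(t) sin(2πt) dt = 0. Then ∫₀¹ (ν₁'(t)² − 2π√(1+r²) ν₁'(t) ν₂(t) + ν₂'(t)² − 4π² ν₂(t)²) dt ≥ ∫₀¹ ((3/4) ν₁'(t)² + 4π² ν₂(t)²) dt. -/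
/-!
Completing the square, `ν₁'² - κ ν₁' ν₂ = ¾ ν₁'² + (ν₁'/2 - κ ν₂)² - κ² ν₂²` with
`κ = 2π√(1+r²)`, so that `κ² ≤ 8π²` for `r ≤ 1`, reduces the claim to the Wirtinger-type
inequality `16π² ∫ ν₂² ≤ ∫ ν₂'²`. That inequality holds because the Fourier coefficients of
`ν₂` vanish for `|n| ≤ 1`, the `n`-th coefficient of `ν₂'` is `2πi n` times that of `ν₂`, and
Parseval's identity compares the two `L²` norms.
-/

open Real MeasureTheory Set Complex

lemma IntervalIntegrable.ofReal {a b : ℝ} {f : ℝ → ℝ} (hf : IntervalIntegrable f volume a b) :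
    IntervalIntegrable (fun x => (f x : ℂ)) volume a b :=
  ⟨hf.1.ofReal, hf.2.ofReal⟩

lemma memLp_restrict_Ioc_of_continuousOn {E : Type*} [NormedAddCommGroup E] {f : ℝ → E}
    {a b : ℝ} (hf : ContinuousOn f (Icc a b)) (p : ENNReal) :
    MemLp f p (volume.restrict (Ioc a b)) := by
  obtain ⟨C, hC⟩ := isCompact_Icc.exists_bound_of_continuousOn hf
  exact MemLp.of_bound ((hf.mono Ioc_subset_Icc_self).aestronglyMeasurable measurableSet_Ioc) C
    (ae_restrict_of_forall_mem measurableSet_Ioc fun x hx => hC x (Ioc_subset_Icc_self hx))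

lemma fourierCoeffOn_ofReal {a b : ℝ} (hab : a < b) {f : ℝ → ℝ}
    (hf : IntervalIntegrable f volume a b) (n : ℤ) :
    fourierCoeffOn hab (fun x => (f x : ℂ)) n =
      (b - a)⁻¹ * ((∫ x in a..b, f x * Real.cos (2 * π * n * x / (b - a)) : ℝ)
        - I * (∫ x in a..b, f x * Real.sin (2 * π * n * x / (b - a)) : ℝ)) := by
  have hpoint : ∀ x : ℝ, fourier (-n) (x : AddCircle (b - a)) • (f x : ℂ) =
      ((f x * Real.cos (2 * π * n * x / (b - a)) : ℝ) : ℂ)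
        - I * ((f x * Real.sin (2 * π * n * x / (b - a)) : ℝ) : ℂ) := by
    intro x
    rw [fourier_coe_apply, smul_eq_mul]
    have : (2 * π * I * ((-n : ℤ) : ℂ) * x / ((b - a : ℝ) : ℂ)) =
        -((2 * π * n * x / (b - a) : ℝ) : ℂ) * I := by push_cast; ring
    rw [this, exp_mul_I, Complex.cos_neg, Complex.sin_neg]
    push_cast
    ring
  have hcos := hf.mul_continuousOn (g := fun x => Real.cos (2 * π * n * x / (b - a))) (by fun_prop)
  have hsin := hf.mul_continuousOn (g := fun x => Real.sin (2 * π * n * x / (b - a))) (by fun_prop)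
  rw [fourierCoeffOn_eq_integral, intervalIntegral.integral_congr fun x _ => hpoint x,
    intervalIntegral.integral_sub hcos.ofReal (hsin.ofReal.const_mul I),
    intervalIntegral.integral_const_mul, intervalIntegral.integral_ofReal,
    intervalIntegral.integral_ofReal, real_smul, one_div]

lemma fourierCoeffOn_deriv_of_periodic {a b : ℝ} (hab : a < b) {f f' : ℝ → ℂ}
    (hf : ∀ x ∈ Icc a b, HasDerivAt f (f' x) x) (hf' : IntervalIntegrable f' volume a b)
    (hper : f a = f b) (n : ℤ) :
    fourierCoeffOn hab f' n = 2 * π * I * n / (b - a) * fourierCoeffOn hab f n := by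
  have hba : ((b - a : ℝ) : ℂ) ≠ 0 := ofReal_ne_zero.mpr (sub_pos.mpr hab).ne'
  rcases eq_or_ne n 0 with rfl | hn
  · have hFTC : ∫ x in a..b, f' x = f b - f a :=
      intervalIntegral.integral_eq_sub_of_hasDerivAt (by rwa [uIcc_of_le hab.le]) hf'
    simp [fourierCoeffOn_eq_integral, hFTC, hper]
  · rw [fourierCoeffOn_of_hasDerivAt (f := f) hab hn (by rwa [uIcc_of_le hab.le]) hf', hper,
      sub_self, mul_zero, zero_sub]
    push_cast at hba ⊢
    field_simp

theorem sq_mul_integral_norm_sq_le_integral_norm_deriv_sq {a b : ℝ} (hab : a < b)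
    {f f' : ℝ → ℂ} (hf : ∀ x ∈ Icc a b, HasDerivAt f (f' x) x)
    (hf' : ContinuousOn f' (Icc a b)) (hper : f a = f b) (k : ℕ)
    (hlow : ∀ n : ℤ, |n| < k → fourierCoeffOn hab f n = 0) :
    (2 * π * k / (b - a)) ^ 2 * ∫ x in a..b, ‖f x‖ ^ 2 ≤ ∫ x in a..b, ‖f' x‖ ^ 2 := by
  have hba : 0 < b - a := sub_pos.mpr hab
  have hfc : ContinuousOn f (Icc a b) := fun x hx => (hf x hx).continuousAt.continuousWithinAt
  have hcoeff := fourierCoeffOn_deriv_of_periodic hab hf (hf'.intervalIntegrable_of_Icc hab.le) hper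
  have hterm : ∀ n : ℤ, (2 * π * k / (b - a)) ^ 2 * ‖fourierCoeffOn hab f n‖ ^ 2
      ≤ ‖fourierCoeffOn hab f' n‖ ^ 2 := by
    intro n
    rcases lt_or_ge |n| k with hn | hn
    · simp [hlow n hn]
    · have hnorm : ‖(2 * π * I * n / (b - a) : ℂ)‖ = 2 * π * |(n : ℝ)| / (b - a) := by
        rw [norm_div, ← ofReal_sub, norm_real, Real.norm_of_nonneg hba.le]
        simp [abs_of_pos pi_pos]
      have hk : (k : ℝ) ≤ |(n : ℝ)| := by exact_mod_cast hn
      rw [hcoeff, norm_mul, hnorm, mul_pow]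
      gcongr
  have hsum := hasSum_le hterm
    ((hasSum_sq_fourierCoeffOn hab (memLp_restrict_Ioc_of_continuousOn hfc 2)).mul_left _)
    (hasSum_sq_fourierCoeffOn hab (memLp_restrict_Ioc_of_continuousOn hf' 2))
  rw [smul_eq_mul, smul_eq_mul, mul_left_comm] at hsum
  exact le_of_mul_le_mul_left hsum (inv_pos.mpr hba)

theorem sixteen_pi_sq_mul_integral_sq_le_integral_deriv_sq {ν : ℝ → ℝ} (hν : ContDiff ℝ 1 ν)
    (hper : ν 0 = ν 1) (h0 : ∫ t in (0:ℝ)..1, ν t = 0)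
    (hcos : ∫ t in (0:ℝ)..1, ν t * Real.cos (2 * π * t) = 0)
    (hsin : ∫ t in (0:ℝ)..1, ν t * Real.sin (2 * π * t) = 0) :
    16 * π ^ 2 * ∫ t in (0:ℝ)..1, ν t ^ 2 ≤ ∫ t in (0:ℝ)..1, deriv ν t ^ 2 := by
  have hlow : ∀ n : ℤ, |n| < (2 : ℕ) → fourierCoeffOn zero_lt_one (fun t => (ν t : ℂ)) n = 0 := by
    intro n hn
    rw [fourierCoeffOn_ofReal _ (hν.continuous.intervalIntegrable 0 1)]
    obtain rfl | rfl | rfl : n = -1 ∨ n = 0 ∨ n = 1 := by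
      rw [Nat.cast_ofNat, abs_lt] at hn; omega
    · simp [neg_mul, hcos, hsin]
    · simp [h0]
    · simp [hcos, hsin]
  have hwirt := sq_mul_integral_norm_sq_le_integral_norm_deriv_sq zero_lt_one
    (f := fun t => (ν t : ℂ)) (f' := fun t => ((deriv ν t : ℝ) : ℂ))
    (fun x _ => (hν.differentiable one_ne_zero x).hasDerivAt.ofReal_comp)
    (continuous_ofReal.comp (hν.continuous_deriv le_rfl)).continuousOn
    (by rw [hper]) 2 hlow
  convert hwirt using 2 <;> simp [norm_real, sq_abs]
  ring

theorem integral_quadratic_form_lower_bound {a b : ℝ} (hab : a ≤ b) {u v w : ℝ → ℝ} (hu : Continuous u)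
    (hv : Continuous v) (hw : Continuous w) {κ c d M : ℝ} (hM : κ ^ 2 + c + d ≤ M)
    (hvw : M * ∫ x in a..b, v x ^ 2 ≤ ∫ x in a..b, w x ^ 2) :
    ∫ x in a..b, (3 / 4 * u x ^ 2 + d * v x ^ 2) ≤
      ∫ x in a..b, (u x ^ 2 - κ * u x * v x + w x ^ 2 - c * v x ^ 2) := by
  have hsq : 0 ≤ ∫ x in a..b, (u x / 2 - κ * v x) ^ 2 :=
    intervalIntegral.integral_nonneg hab fun _ _ => sq_nonneg _
  have hv2 : 0 ≤ ∫ x in a..b, v x ^ 2 :=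
    intervalIntegral.integral_nonneg hab fun _ _ => sq_nonneg _
  have hdiff : (∫ x in a..b, (u x ^ 2 - κ * u x * v x + w x ^ 2 - c * v x ^ 2)) -
      ∫ x in a..b, (3 / 4 * u x ^ 2 + d * v x ^ 2) =
      (∫ x in a..b, (u x / 2 - κ * v x) ^ 2) +
        ((∫ x in a..b, w x ^ 2) - (κ ^ 2 + c + d) * ∫ x in a..b, v x ^ 2) := by
    rw [← intervalIntegral.integral_const_mul, ← intervalIntegral.integral_sub,
      ← intervalIntegral.integral_sub, ← intervalIntegral.integral_add]
    · congr 1 with x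
      ring
    all_goals exact Continuous.intervalIntegrable (by fun_prop) _ _
  nlinarith [mul_le_mul_of_nonneg_right hM hv2]

theorem stmt_17_general (r : ℝ) (hr0 : 0 < r) (hr1 : r ≤ 1) (ν₁ ν₂ : ℝ → ℝ)
    (h₁ : ContDiff ℝ 1 ν₁) (h₂ : ContDiff ℝ 1 ν₂)
    (hper₂ : ∀ t : ℝ, ν₂ (t + 1) = ν₂ t)
    (h0 : ∫ t in (0:ℝ)..1, ν₂ t = 0)
    (hcos : ∫ t in (0:ℝ)..1, ν₂ t * Real.cos (2 * Real.pi * t) = 0)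
    (hsin : ∫ t in (0:ℝ)..1, ν₂ t * Real.sin (2 * Real.pi * t) = 0) :
    (∫ t in (0:ℝ)..1,
        ((deriv ν₁ t) ^ 2 - 2 * Real.pi * Real.sqrt (1 + r ^ 2) * deriv ν₁ t * ν₂ t +
          (deriv ν₂ t) ^ 2 - 4 * Real.pi ^ 2 * (ν₂ t) ^ 2)) ≥
      ∫ t in (0:ℝ)..1, ((3 / 4) * (deriv ν₁ t) ^ 2 + 4 * Real.pi ^ 2 * (ν₂ t) ^ 2) := by
  have hwirt := sixteen_pi_sq_mul_integral_sq_le_integral_deriv_sq h₂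
    (by simpa using (hper₂ 0).symm) h0 hcos hsin
  have hκ : (2 * π * √(1 + r ^ 2)) ^ 2 + 4 * π ^ 2 + 4 * π ^ 2 ≤ 16 * π ^ 2 := by
    have hr : r ^ 2 ≤ 1 := by nlinarith
    rw [mul_pow, sq_sqrt (by positivity)]
    nlinarith [pi_pos]
  exact integral_quadratic_form_lower_bound zero_le_one (h₁.continuous_deriv le_rfl) h₂.continuous
    (h₂.continuous_deriv le_rfl) hκ hwirt

/-- the coercivity estimate for the quadratic form
∫ ν₁'² − 2π√(1+r²) ν₁'ν₂ + ν₂'² − 4π²ν₂² on the orthogonal complement of the first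
Fourier modes (in ν₂), for 0 < r ≤ 1. -/
theorem stmt_17 (r : ℝ) (hr0 : 0 < r) (hr1 : r ≤ 1) (ν₁ ν₂ : ℝ → ℝ)
    (h₁ : ContDiff ℝ 1 ν₁) (h₂ : ContDiff ℝ 1 ν₂)
    (hper₁ : ∀ t : ℝ, ν₁ (t + 1) = ν₁ t) (hper₂ : ∀ t : ℝ, ν₂ (t + 1) = ν₂ t)
    (h0 : ∫ t in (0:ℝ)..1, ν₂ t = 0)
    (hcos : ∫ t in (0:ℝ)..1, ν₂ t * Real.cos (2 * Real.pi * t) = 0)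
    (hsin : ∫ t in (0:ℝ)..1, ν₂ t * Real.sin (2 * Real.pi * t) = 0) :
    (∫ t in (0:ℝ)..1,
        ((deriv ν₁ t) ^ 2 - 2 * Real.pi * Real.sqrt (1 + r ^ 2) * deriv ν₁ t * ν₂ t +
          (deriv ν₂ t) ^ 2 - 4 * Real.pi ^ 2 * (ν₂ t) ^ 2)) ≥
      ∫ t in (0:ℝ)..1, ((3 / 4) * (deriv ν₁ t) ^ 2 + 4 * Real.pi ^ 2 * (ν₂ t) ^ 2) :=
  stmt_17_general r hr0 hr1 ν₁ ν₂ h₁ h₂ hper₂ h0 hcos hsin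
end

section
/- Let r > 0 and x, y ∈ ℝ. Define f₁(t) = x cos(2πt) + y sin(2πt) and f₂(t) = (8π²√(1+r²)/(4π²(2+r²)+1)) (y cos(2πt) − x sin(2πt)). Then ∫₀¹ (f₁'(t)² − 2π√(1+r²) f₁'(t) f₂(t)) dt = (2π²(1 − 4π²r²)/(4π²(2+r²)+1)) (x² + y²). -/
noncomputable section

open Real

/-- After the double-angle formulas only the constant term `(a² + b²)/2` survives: the doubled
harmonics integrate to zero over a period. -/
lemma integral_first_mode_sq (a b : ℝ) :
    ∫ t in (0:ℝ)..1, (a * cos (2 * π * t) + b * sin (2 * π * t)) ^ 2 = (a ^ 2 + b ^ 2) / 2 := by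
  have h4π : (4 * π : ℝ) ≠ 0 := by positivity
  have hcos : ∫ t in (0:ℝ)..1, cos (4 * π * t) = 0 := by
    simpa [intervalIntegral.integral_comp_mul_left (fun t => cos t) h4π] using sin_nat_mul_pi 4
  have hsin : ∫ t in (0:ℝ)..1, sin (4 * π * t) = 0 := by
    have hcos4π : cos (4 * π) = 1 := by
      rw [show (4 : ℝ) * π = (2 : ℕ) * (2 * π) by push_cast; ring, cos_nat_mul_two_pi]
    simp [intervalIntegral.integral_comp_mul_left (fun t => sin t) h4π, hcos4π]
  have hexpand : ∀ t : ℝ, (a * cos (2 * π * t) + b * sin (2 * π * t)) ^ 2 =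
      (a ^ 2 + b ^ 2) / 2 + ((a ^ 2 - b ^ 2) / 2 * cos (4 * π * t) + a * b * sin (4 * π * t)) := by
    intro t
    have hθ : 4 * π * t = 2 * (2 * π * t) := by ring
    rw [hθ, cos_two_mul, sin_two_mul]
    linear_combination b ^ 2 * sin_sq_add_cos_sq (2 * π * t)
  simp only [hexpand]
  rw [intervalIntegral.integral_add intervalIntegrable_const
      (Continuous.intervalIntegrable (by fun_prop) _ _),
    intervalIntegral.integral_add (Continuous.intervalIntegrable (by fun_prop) _ _)
      (Continuous.intervalIntegrable (by fun_prop) _ _),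
    intervalIntegral.integral_const_mul, intervalIntegral.integral_const_mul, hcos, hsin]
  simp

lemma hasDerivAt_first_mode (a b t : ℝ) :
    HasDerivAt (fun t => a * cos (2 * π * t) + b * sin (2 * π * t))
      (2 * π * (b * cos (2 * π * t) - a * sin (2 * π * t))) t := by
  have hlin : HasDerivAt (fun t : ℝ => 2 * π * t) (2 * π) t := by
    simpa using (hasDerivAt_id t).const_mul (2 * π)
  exact ((((hasDerivAt_cos _).comp t hlin).const_mul a).add
    (((hasDerivAt_sin _).comp t hlin).const_mul b)).congr_deriv (by ring)

theorem stmt_18_general (r x y : ℝ) :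
    let f₁ : ℝ → ℝ := fun t => x * Real.cos (2 * Real.pi * t) + y * Real.sin (2 * Real.pi * t)
    let f₂ : ℝ → ℝ := fun t =>
      8 * Real.pi ^ 2 * Real.sqrt (1 + r ^ 2) / (4 * Real.pi ^ 2 * (2 + r ^ 2) + 1) *
        (y * Real.cos (2 * Real.pi * t) - x * Real.sin (2 * Real.pi * t))
    (∫ t in (0:ℝ)..1,
        ((deriv f₁ t) ^ 2 - 2 * Real.pi * Real.sqrt (1 + r ^ 2) * deriv f₁ t * f₂ t)) =
      2 * Real.pi ^ 2 * (1 - 4 * Real.pi ^ 2 * r ^ 2) / (4 * Real.pi ^ 2 * (2 + r ^ 2) + 1) *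
        (x ^ 2 + y ^ 2) := by
  intro f₁ f₂
  have hQ : 4 * π ^ 2 * (2 + r ^ 2) + 1 ≠ 0 := by positivity
  have hsqrt : √(1 + r ^ 2) ^ 2 = 1 + r ^ 2 := sq_sqrt (by positivity)
  -- `f₁'` and `f₂` are both multiples of the mode `y cos - x sin`.
  have hintegrand : ∀ t, deriv f₁ t ^ 2 - 2 * π * √(1 + r ^ 2) * deriv f₁ t * f₂ t =
      4 * π ^ 2 * (1 - 8 * π ^ 2 * (1 + r ^ 2) / (4 * π ^ 2 * (2 + r ^ 2) + 1)) *
        (y * cos (2 * π * t) + -x * sin (2 * π * t)) ^ 2 := by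
    intro t
    rw [(hasDerivAt_first_mode x y t).deriv]
    simp only [f₂]
    linear_combination (-32 * π ^ 4 / (4 * π ^ 2 * (2 + r ^ 2) + 1) *
      (y * cos (2 * π * t) - x * sin (2 * π * t)) ^ 2) * hsqrt
  simp only [hintegrand, intervalIntegral.integral_const_mul, integral_first_mode_sq]
  field_simp
  ring

/-- the explicit value of ∫₀¹ (f₁'² − 2π√(1+r²) f₁' f₂) for the first
Fourier mode pair f₁, f₂. -/
theorem stmt_18 (r x y : ℝ) (hr : 0 < r) :
    let f₁ : ℝ → ℝ := fun t => x * Real.cos (2 * Real.pi * t) + y * Real.sin (2 * Real.pi * t)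
    let f₂ : ℝ → ℝ := fun t =>
      8 * Real.pi ^ 2 * Real.sqrt (1 + r ^ 2) / (4 * Real.pi ^ 2 * (2 + r ^ 2) + 1) *
        (y * Real.cos (2 * Real.pi * t) - x * Real.sin (2 * Real.pi * t))
    (∫ t in (0:ℝ)..1,
        ((deriv f₁ t) ^ 2 - 2 * Real.pi * Real.sqrt (1 + r ^ 2) * deriv f₁ t * f₂ t)) =
      2 * Real.pi ^ 2 * (1 - 4 * Real.pi ^ 2 * r ^ 2) / (4 * Real.pi ^ 2 * (2 + r ^ 2) + 1) *
        (x ^ 2 + y ^ 2) :=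
  stmt_18_general r x y
end
end

section
/- Let K₀ > 0 and let k, A, L be real numbers with k > √K₀, A ≥ 0, and L ≥ 0. If 2π ≥ −K₀ A + k L and L² ≥ 4π A + K₀ A², then L ≤ 2π/(k − √K₀). -/
/-! Dropping the positive term 4πA from the isoperimetric inequality leaves √K₀·A ≤ L, so the
area term K₀·A = √K₀·(√K₀·A) in the Gauss–Bonnet inequality is at most √K₀·L, which leaves
(k − √K₀)·L ≤ 2π. -/

open Real

theorem sqrt_mul_le_of_mul_sq_le_sq {K A L : ℝ} (hK : 0 ≤ K) (hA : 0 ≤ A) (hL : 0 ≤ L)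
    (h : K * A ^ 2 ≤ L ^ 2) : √K * A ≤ L := by
  rwa [← pow_le_pow_iff_left₀ (by positivity) hL two_ne_zero, mul_pow, sq_sqrt hK]

/-- the arithmetic core of the a priori length estimate: combining the
Gauss–Bonnet inequality 2π ≥ −K₀A + kL with the isoperimetric inequality
L² ≥ 4πA + K₀A² yields L ≤ 2π/(k − √K₀). -/
theorem stmt_19 (K₀ k A L : ℝ) (hK₀ : 0 < K₀) (hk : Real.sqrt K₀ < k)
    (hA : 0 ≤ A) (hL : 0 ≤ L)
    (hGB : 2 * Real.pi ≥ -K₀ * A + k * L)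
    (hiso : L ^ 2 ≥ 4 * Real.pi * A + K₀ * A ^ 2) :
    L ≤ 2 * Real.pi / (k - Real.sqrt K₀) := by
  have hAL : √K₀ * A ≤ L := by
    refine sqrt_mul_le_of_mul_sq_le_sq hK₀.le hA hL ?_
    have : 0 ≤ 4 * π * A := by positivity
    linarith
  rw [le_div_iff₀ (sub_pos.2 hk)]
  calc L * (k - √K₀) = k * L - √K₀ * L := by ring
    _ ≤ k * L - √K₀ * (√K₀ * A) := by gcongr
    _ = k * L - K₀ * A := by rw [← mul_assoc, mul_self_sqrt hK₀.le]
    _ ≤ 2 * π := by linarith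
end
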